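/- arXiv:1701.06471 — 2 statements merged into one kernel-verified Lean document; each statement's English description precedes it below -/
import Mathlib

section
/- Suppose a₁, a₂ satisfy the reduced Bogomolny equations with a₁ = a₂ = 0 on {x₃ = 0}, and set u(x₁,x₂,x₃) = ∫₀^{x₃} f(x₁,x₂,q)dq. If h₀ is holomorphic in x₁ + ix₂, then h = h₀ e^{−u} e^{it} satisfies the Cauchy–Riemann system ∂h/∂x₁ + i∂h/∂x₂ = (a₁ + ia₂)∂h/∂t and ∂h/∂x₃ = if ∂h/∂t. -/
open Real Complex intervalIntegral MeasureTheory Metric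

/-- Slice derivative of a smooth two-variable function. -/
lemma sliceDeriv {G : ℝ × ℝ → ℝ} (hG : ContDiff ℝ (⊤ : ℕ∞) G) (x q : ℝ) :
    HasDerivAt (fun y => G (y, q)) (fderiv ℝ G (x, q) (1, 0)) x := by
  have h1 : HasDerivAt (fun y : ℝ => (y, q)) ((1 : ℝ), (0 : ℝ)) x :=
    (hasDerivAt_id x).prodMk (hasDerivAt_const x q)
  exact (hG.differentiable (by simp) (x, q)).hasFDerivAt.comp_hasDerivAt x h1

lemma sliceDerivCont {G : ℝ × ℝ → ℝ} (hG : ContDiff ℝ (⊤ : ℕ∞) G) :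
    Continuous fun p : ℝ × ℝ => fderiv ℝ G p (1, 0) :=
  (hG.continuous_fderiv (by simp)).clm_apply continuous_const

/-- Slice derivative in the last variable of a smooth three-variable function. -/
lemma sliceDeriv3 {G : ℝ × ℝ × ℝ → ℝ} (hG : ContDiff ℝ (⊤ : ℕ∞) G) (x₁ x₂ q : ℝ) :
    HasDerivAt (fun y => G (x₁, x₂, y)) (fderiv ℝ G (x₁, x₂, q) (0, 0, 1)) q := by
  have h1 : HasDerivAt (fun y : ℝ => (x₁, x₂, y)) ((0 : ℝ), (0 : ℝ), (1 : ℝ)) q :=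
    (hasDerivAt_const q x₁).prodMk ((hasDerivAt_const q x₂).prodMk (hasDerivAt_id q))
  exact (hG.differentiable (by simp) (x₁, x₂, q)).hasFDerivAt.comp_hasDerivAt q h1

lemma sliceDeriv3Cont {G : ℝ × ℝ × ℝ → ℝ} (hG : ContDiff ℝ (⊤ : ℕ∞) G) (x₁ x₂ : ℝ) :
    Continuous fun q : ℝ => fderiv ℝ G (x₁, x₂, q) (0, 0, 1) :=
  ((hG.continuous_fderiv (by simp)).comp
    (continuous_const.prodMk (continuous_const.prodMk continuous_id))).clm_apply
      continuous_const

/-- Differentiation under the interval integral for a smooth integrand. -/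
lemma deriv_under_integral {G : ℝ × ℝ → ℝ} (hG : ContDiff ℝ (⊤ : ℕ∞) G) (x₀ b : ℝ) :
    HasDerivAt (fun y => ∫ q in (0:ℝ)..b, G (y, q))
      (∫ q in (0:ℝ)..b, fderiv ℝ G (x₀, q) (1, 0)) x₀ := by
  set D : ℝ × ℝ → ℝ := fun p => fderiv ℝ G p (1, 0) with hD
  have hDc : Continuous D := sliceDerivCont hG
  obtain ⟨C, hC⟩ : ∃ C, ∀ p ∈ (Set.Icc (x₀ - 1) (x₀ + 1)) ×ˢ (Set.uIcc (0:ℝ) b),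
      ‖D p‖ ≤ C := by
    exact (isCompact_Icc.prod isCompact_uIcc).exists_bound_of_continuousOn hDc.continuousOn
  have key := intervalIntegral.hasDerivAt_integral_of_dominated_loc_of_deriv_le
    (F := fun x q => G (x, q)) (F' := fun x q => D (x, q)) (x₀ := x₀)
    (a := (0:ℝ)) (b := b) (μ := volume) (bound := fun _ => C) (ball_mem_nhds x₀ one_pos)
    (Filter.Eventually.of_forall fun x =>
      ((hG.continuous.comp (continuous_const.prodMk continuous_id)).aestronglyMeasurable))
    ((hG.continuous.comp (continuous_const.prodMk continuous_id)).intervalIntegrable 0 b)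
    ((hDc.comp (continuous_const.prodMk continuous_id)).aestronglyMeasurable)
    (Filter.Eventually.of_forall fun q hq x hx => by
      refine hC (x, q) ⟨?_, Set.uIoc_subset_uIcc hq⟩
      have := le_of_lt (mem_ball.1 hx)
      rw [Real.dist_eq] at this
      constructor <;> [linarith [neg_abs_le (x - x₀)]; linarith [le_abs_self (x - x₀)]])
    (intervalIntegrable_const)
    (Filter.Eventually.of_forall fun q hq x hx => sliceDeriv hG x q)
  exact key.2

/-- Suppose `a₁, a₂` satisfy the reduced Bogomolny equations
`∂a₂/∂x₃ = ∂f/∂x₁`, `∂a₁/∂x₃ = -∂f/∂x₂`, `∂a₁/∂x₂ - ∂a₂/∂x₁ = ∂f/∂x₃`,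
with `a₁ = a₂ = 0` and `∂f/∂x₃ = 0` on `{x₃ = 0}`, and set
`u(x₁,x₂,x₃) = ∫₀^{x₃} f(x₁,x₂,q)dq`. If `h₀(x₁,x₂) = H(x₁+ix₂)` is holomorphic, then
`h = h₀ e^{-u} e^{it}` satisfies the Cauchy–Riemann system
`∂h/∂x₁ + i ∂h/∂x₂ = (a₁ + i a₂) ∂h/∂t` and `∂h/∂x₃ = i f ∂h/∂t`. -/
theorem stmt4 (f a₁ a₂ : ℝ → ℝ → ℝ → ℝ)
    (hf : ContDiff ℝ (⊤ : ℕ∞) (fun p : ℝ × ℝ × ℝ => f p.1 p.2.1 p.2.2))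
    (ha₁ : ContDiff ℝ (⊤ : ℕ∞) (fun p : ℝ × ℝ × ℝ => a₁ p.1 p.2.1 p.2.2))
    (ha₂ : ContDiff ℝ (⊤ : ℕ∞) (fun p : ℝ × ℝ × ℝ => a₂ p.1 p.2.1 p.2.2))
    (hb₁ : ∀ x₁ x₂ x₃, deriv (fun y => a₂ x₁ x₂ y) x₃ = deriv (fun y => f y x₂ x₃) x₁)
    (hb₂ : ∀ x₁ x₂ x₃, deriv (fun y => a₁ x₁ x₂ y) x₃ = - deriv (fun y => f x₁ y x₃) x₂)
    (hb₃ : ∀ x₁ x₂ x₃, deriv (fun y => a₁ x₁ y x₃) x₂ - deriv (fun y => a₂ y x₂ x₃) x₁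
      = deriv (fun y => f x₁ x₂ y) x₃)
    (hzero : ∀ x₁ x₂, a₁ x₁ x₂ 0 = 0 ∧ a₂ x₁ x₂ 0 = 0)
    (hf₃ : ∀ x₁ x₂, deriv (fun y => f x₁ x₂ y) 0 = 0)
    (H : ℂ → ℂ) (hH : Differentiable ℂ H)
    (u : ℝ → ℝ → ℝ → ℝ) (hu : ∀ x₁ x₂ x₃, u x₁ x₂ x₃ = ∫ q in (0:ℝ)..x₃, f x₁ x₂ q)
    (h : ℝ → ℝ → ℝ → ℝ → ℂ)
    (hh : ∀ x₁ x₂ x₃ t, h x₁ x₂ x₃ t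
      = H ((x₁ : ℂ) + (x₂ : ℂ) * Complex.I) * Complex.exp (-(u x₁ x₂ x₃ : ℂ))
          * Complex.exp ((t : ℂ) * Complex.I)) :
    ∀ x₁ x₂ x₃ t,
      (deriv (fun y => h y x₂ x₃ t) x₁ + Complex.I * deriv (fun y => h x₁ y x₃ t) x₂
        = ((a₁ x₁ x₂ x₃ : ℂ) + Complex.I * (a₂ x₁ x₂ x₃ : ℂ)) * deriv (fun τ => h x₁ x₂ x₃ τ) t) ∧
      (deriv (fun y => h x₁ x₂ y t) x₃
        = Complex.I * (f x₁ x₂ x₃ : ℂ) * deriv (fun τ => h x₁ x₂ x₃ τ) t) := by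
  intro x₁ x₂ x₃ t
  -- slice smoothness
  have hG₁ : ContDiff ℝ (⊤ : ℕ∞) (fun p : ℝ × ℝ => f p.1 x₂ p.2) :=
    hf.comp (contDiff_fst.prodMk (contDiff_const.prodMk contDiff_snd))
  have hG₂ : ContDiff ℝ (⊤ : ℕ∞) (fun p : ℝ × ℝ => f x₁ p.1 p.2) :=
    hf.comp (contDiff_const.prodMk (contDiff_fst.prodMk contDiff_snd))
  -- derivative of u in x₁ is a₂
  have key₁ : HasDerivAt (fun y => u y x₂ x₃) (a₂ x₁ x₂ x₃) x₁ := by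
    have h0 := deriv_under_integral hG₁ x₁ x₃
    have e1 : (fun y => u y x₂ x₃) = fun y => ∫ q in (0:ℝ)..x₃, f y x₂ q :=
      funext fun y => hu y x₂ x₃
    have e2 : (∫ q in (0:ℝ)..x₃, fderiv ℝ (fun p : ℝ × ℝ => f p.1 x₂ p.2) (x₁, q) (1, 0))
        = a₂ x₁ x₂ x₃ := by
      have diffa : Differentiable ℝ (fun y => a₂ x₁ x₂ y) :=
        (ha₂.differentiable (by simp)).comp
          ((differentiable_const _).prodMk ((differentiable_const _).prodMk differentiable_id))
      have ec : ∀ q, deriv (fun y => a₂ x₁ x₂ y) q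
          = fderiv ℝ (fun p : ℝ × ℝ × ℝ => a₂ p.1 p.2.1 p.2.2) (x₁, x₂, q) (0, 0, 1) :=
        fun q => (sliceDeriv3 ha₂ x₁ x₂ q).deriv
      have hcont : Continuous fun q => deriv (fun y => a₂ x₁ x₂ y) q := by
        rw [funext ec]; exact sliceDeriv3Cont ha₂ x₁ x₂
      have hsub : (∫ q in (0:ℝ)..x₃, deriv (fun y => a₂ x₁ x₂ y) q)
          = a₂ x₁ x₂ x₃ - a₂ x₁ x₂ 0 :=
        intervalIntegral.integral_eq_sub_of_hasDerivAt
          (fun q _ => (diffa q).hasDerivAt) (hcont.intervalIntegrable 0 x₃)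
      have hcongr : (∫ q in (0:ℝ)..x₃, fderiv ℝ (fun p : ℝ × ℝ => f p.1 x₂ p.2) (x₁, q) (1, 0))
          = ∫ q in (0:ℝ)..x₃, deriv (fun y => a₂ x₁ x₂ y) q := by
        refine intervalIntegral.integral_congr fun q _ => ?_
        rw [hb₁ x₁ x₂ q]
        exact ((sliceDeriv hG₁ x₁ q).deriv).symm
      rw [hcongr, hsub, (hzero x₁ x₂).2, sub_zero]
    rw [e1, ← e2]
    exact h0
  -- derivative of u in x₂ is -a₁
  have key₂ : HasDerivAt (fun y => u x₁ y x₃) (-(a₁ x₁ x₂ x₃)) x₂ := by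
    have h0 := deriv_under_integral hG₂ x₂ x₃
    have e1 : (fun y => u x₁ y x₃) = fun y => ∫ q in (0:ℝ)..x₃, f x₁ y q :=
      funext fun y => hu x₁ y x₃
    have e2 : (∫ q in (0:ℝ)..x₃, fderiv ℝ (fun p : ℝ × ℝ => f x₁ p.1 p.2) (x₂, q) (1, 0))
        = -(a₁ x₁ x₂ x₃) := by
      have diffa : Differentiable ℝ (fun y => a₁ x₁ x₂ y) :=
        (ha₁.differentiable (by simp)).comp
          ((differentiable_const _).prodMk ((differentiable_const _).prodMk differentiable_id))
      have ec : ∀ q, deriv (fun y => a₁ x₁ x₂ y) q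
          = fderiv ℝ (fun p : ℝ × ℝ × ℝ => a₁ p.1 p.2.1 p.2.2) (x₁, x₂, q) (0, 0, 1) :=
        fun q => (sliceDeriv3 ha₁ x₁ x₂ q).deriv
      have hcont : Continuous fun q => deriv (fun y => a₁ x₁ x₂ y) q := by
        rw [funext ec]; exact sliceDeriv3Cont ha₁ x₁ x₂
      have hsub : (∫ q in (0:ℝ)..x₃, deriv (fun y => a₁ x₁ x₂ y) q)
          = a₁ x₁ x₂ x₃ - a₁ x₁ x₂ 0 :=
        intervalIntegral.integral_eq_sub_of_hasDerivAt
          (fun q _ => (diffa q).hasDerivAt) (hcont.intervalIntegrable 0 x₃)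
      have hcongr : (∫ q in (0:ℝ)..x₃, fderiv ℝ (fun p : ℝ × ℝ => f x₁ p.1 p.2) (x₂, q) (1, 0))
          = ∫ q in (0:ℝ)..x₃, -deriv (fun y => a₁ x₁ x₂ y) q := by
        refine intervalIntegral.integral_congr fun q _ => ?_
        rw [hb₂ x₁ x₂ q, neg_neg]
        exact ((sliceDeriv hG₂ x₂ q).deriv).symm
      rw [hcongr, intervalIntegral.integral_neg, hsub, (hzero x₁ x₂).1, sub_zero]
    rw [e1, ← e2]
    exact h0
  -- derivative of u in x₃ is f
  have key₃ : HasDerivAt (fun y => u x₁ x₂ y) (f x₁ x₂ x₃) x₃ := by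
    have e1 : (fun y => u x₁ x₂ y) = fun y => ∫ q in (0:ℝ)..y, f x₁ x₂ q :=
      funext fun y => hu x₁ x₂ y
    rw [e1]
    have hc : Continuous fun q => f x₁ x₂ q :=
      hf.continuous.comp (continuous_const.prodMk (continuous_const.prodMk continuous_id))
    exact (hc.integral_hasStrictDerivAt 0 x₃).hasDerivAt
  -- abbreviations
  set z : ℂ := (x₁ : ℂ) + (x₂ : ℂ) * Complex.I with hz
  set A : ℂ := Complex.exp (-(u x₁ x₂ x₃ : ℂ)) with hA
  set B : ℂ := Complex.exp ((t : ℂ) * Complex.I) with hB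
  set Hz : ℂ := H z with hHz
  set H' : ℂ := deriv H z with hH'
  -- derivative of h in x₁
  have d1 : HasDerivAt (fun y => h y x₂ x₃ t)
      ((H' * A + Hz * (A * -(a₂ x₁ x₂ x₃ : ℂ))) * B) x₁ := by
    have e1 : (fun y => h y x₂ x₃ t) = fun y : ℝ =>
        H ((y : ℂ) + (x₂ : ℂ) * Complex.I) * Complex.exp (-(u y x₂ x₃ : ℂ))
          * Complex.exp ((t : ℂ) * Complex.I) := funext fun y => hh y x₂ x₃ t
    rw [e1]
    have c1 : HasDerivAt (fun y : ℝ => H ((y : ℂ) + (x₂ : ℂ) * Complex.I)) H' x₁ := by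
      have inner : HasDerivAt (fun w : ℂ => w + (x₂ : ℂ) * Complex.I) 1 (x₁ : ℂ) :=
        (hasDerivAt_id _).add_const _
      have := ((hH z).hasDerivAt.comp (x₁ : ℂ) inner)
      rw [mul_one] at this
      exact this.comp_ofReal
    have c2 : HasDerivAt (fun y : ℝ => Complex.exp (-(u y x₂ x₃ : ℂ)))
        (A * -(a₂ x₁ x₂ x₃ : ℂ)) x₁ := by
      have := (key₁.ofReal_comp).neg.cexp
      simpa [hA] using this
    exact (c1.mul c2).mul_const B
  -- derivative of h in x₂
  have d2 : HasDerivAt (fun y => h x₁ y x₃ t)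
      ((H' * Complex.I * A + Hz * (A * (a₁ x₁ x₂ x₃ : ℂ))) * B) x₂ := by
    have e1 : (fun y => h x₁ y x₃ t) = fun y : ℝ =>
        H ((x₁ : ℂ) + (y : ℂ) * Complex.I) * Complex.exp (-(u x₁ y x₃ : ℂ))
          * Complex.exp ((t : ℂ) * Complex.I) := funext fun y => hh x₁ y x₃ t
    rw [e1]
    have c1 : HasDerivAt (fun y : ℝ => H ((x₁ : ℂ) + (y : ℂ) * Complex.I))
        (H' * Complex.I) x₂ := by
      have inner : HasDerivAt (fun w : ℂ => (x₁ : ℂ) + w * Complex.I) Complex.I (x₂ : ℂ) := by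
        simpa using ((hasDerivAt_id ((x₂:ℂ))).mul_const Complex.I).const_add (x₁ : ℂ)
      exact (((hH z).hasDerivAt.comp (x₂ : ℂ) inner)).comp_ofReal
    have c2 : HasDerivAt (fun y : ℝ => Complex.exp (-(u x₁ y x₃ : ℂ)))
        (A * (a₁ x₁ x₂ x₃ : ℂ)) x₂ := by
      have := (key₂.ofReal_comp).neg.cexp
      simpa [hA] using this
    exact (c1.mul c2).mul_const B
  -- derivative of h in x₃
  have d3 : HasDerivAt (fun y => h x₁ x₂ y t)
      (Hz * (A * -(f x₁ x₂ x₃ : ℂ)) * B) x₃ := by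
    have e1 : (fun y => h x₁ x₂ y t) = fun y : ℝ =>
        Hz * Complex.exp (-(u x₁ x₂ y : ℂ)) * Complex.exp ((t : ℂ) * Complex.I) :=
      funext fun y => hh x₁ x₂ y t
    rw [e1]
    have c2 : HasDerivAt (fun y : ℝ => Complex.exp (-(u x₁ x₂ y : ℂ)))
        (A * -(f x₁ x₂ x₃ : ℂ)) x₃ := by
      have := (key₃.ofReal_comp).neg.cexp
      simpa [hA] using this
    exact ((c2.const_mul Hz).mul_const B)
  -- derivative of h in t
  have dt : HasDerivAt (fun τ => h x₁ x₂ x₃ τ) (Hz * A * (B * Complex.I)) t := by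
    have e1 : (fun τ => h x₁ x₂ x₃ τ) = fun τ : ℝ =>
        Hz * A * Complex.exp ((τ : ℂ) * Complex.I) := funext fun τ => hh x₁ x₂ x₃ τ
    rw [e1]
    have c1 : HasDerivAt (fun τ : ℝ => ((τ : ℂ) * Complex.I)) Complex.I t := by
      simpa using ((hasDerivAt_id t).ofReal_comp).mul_const Complex.I
    have := c1.cexp.const_mul (Hz * A)
    simpa [hB] using this
  rw [d1.deriv, d2.deriv, d3.deriv, dt.deriv]
  constructor
  · linear_combination (H' * A * B - (a₂ x₁ x₂ x₃ : ℂ) * Hz * A * B) * Complex.I_sq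
  · linear_combination (-(f x₁ x₂ x₃ : ℂ) * Hz * A * B) * Complex.I_sq
end

section
/- For the Gibbons–Hawking metric g = f(dx₁²+dx₂²+dx₃²) + f^{-1}α² with f positive harmonic, the pointwise norm squared of the curvature operator satisfies |Rm(g)|² = 6f^{-6}|Df|⁴ + f^{-4}Σ_{i,j}f_{ij}² − 6f^{-5}Σ_{i,j}f_{ij}f_i f_j = (1/(4f)) ΔΔ(f^{-1}), where Δ is the Euclidean Laplacian. -/
open Real

/-- Partial derivative in the `i`-th coordinate direction on `ℝ³`. -/
noncomputable def pd (i : Fin 3) (g : (Fin 3 → ℝ) → ℝ) : (Fin 3 → ℝ) → ℝ :=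
  fun x => fderiv ℝ g x (Pi.single i 1)

/-- The Euclidean Laplacian on `ℝ³`. -/
noncomputable def lap (g : (Fin 3 → ℝ) → ℝ) : (Fin 3 → ℝ) → ℝ :=
  fun x => ∑ i, pd i (pd i g) x

section Aux

variable {u v f : (Fin 3 → ℝ) → ℝ} {x : Fin 3 → ℝ} {i : Fin 3}

lemma contDiff_pd (i : Fin 3) (hf : ContDiff ℝ (⊤ : ℕ∞) f) : ContDiff ℝ (⊤ : ℕ∞) (pd i f) := by
  exact (ContinuousLinearMap.apply ℝ ℝ (Pi.single i 1)).contDiff.comp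
    (hf.fderiv_right (m := (⊤ : ℕ∞)) (by simp))

lemma pd_congr {Ω : Set (Fin 3 → ℝ)} (hΩ : IsOpen Ω) (hx : x ∈ Ω)
    (h : ∀ y ∈ Ω, u y = v y) : pd i u x = pd i v x := by
  unfold pd
  have : u =ᶠ[nhds x] v := by
    filter_upwards [hΩ.mem_nhds hx] with y hy using h y hy
  rw [this.fderiv_eq]

lemma pd_const (i : Fin 3) (x : Fin 3 → ℝ) (c : ℝ) : pd i (fun _ => c) x = 0 := by simp [pd]

lemma pd_neg : pd i (fun y => -u y) x = -pd i u x := by simp [pd, fderiv_neg]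

lemma pd_add (h1 : DifferentiableAt ℝ u x) (h2 : DifferentiableAt ℝ v x) :
    pd i (fun y => u y + v y) x = pd i u x + pd i v x := by simp [pd, fderiv_fun_add h1 h2]

lemma pd_sub (h1 : DifferentiableAt ℝ u x) (h2 : DifferentiableAt ℝ v x) :
    pd i (fun y => u y - v y) x = pd i u x - pd i v x := by simp [pd, fderiv_fun_sub h1 h2]

lemma pd_mul (h1 : DifferentiableAt ℝ u x) (h2 : DifferentiableAt ℝ v x) :
    pd i (fun y => u y * v y) x = pd i u x * v x + u x * pd i v x := by
  simp [pd, fderiv_fun_mul h1 h2]; ring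

lemma pd_inv (h1 : DifferentiableAt ℝ u x) (hu : u x ≠ 0) :
    pd i (fun y => (u y)⁻¹) x = -((u x)⁻¹)^2 * pd i u x := by
  have : pd i (fun y => (u y)⁻¹) x = pd i (Inv.inv ∘ u) x := rfl
  rw [this]; unfold pd
  rw [fderiv_comp x (differentiableAt_inv hu) h1, fderiv_inv]
  simp [inv_pow]; ring

lemma pd_pow (n : ℕ) (h1 : DifferentiableAt ℝ u x) :
    pd i (fun y => u y ^ n) x = n * u x ^ (n - 1) * pd i u x := by
  induction n with
  | zero => simp [pd_const]
  | succ m ih =>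
    have : (fun y => u y ^ (m+1)) = fun y => u y ^ m * u y := by funext y; rw [pow_succ]
    rw [this, pd_mul (u := fun y => u y ^ m) (h1.pow m) h1, ih]
    cases m with
    | zero => simp
    | succ k => simp [pow_succ]; ring

lemma pd_pd (hf : ContDiff ℝ (⊤ : ℕ∞) f) (i j : Fin 3) :
    pd i (pd j f) x = fderiv ℝ (fderiv ℝ f) x (Pi.single i 1) (Pi.single j 1) := by
  have h1 : DifferentiableAt ℝ (fderiv ℝ f) x :=
    ((hf.fderiv_right (m := (⊤ : ℕ∞)) (by simp)).differentiable (by simp)) x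
  have h2 : DifferentiableAt ℝ (fun _ : Fin 3 → ℝ => (Pi.single j 1 : Fin 3 → ℝ)) x :=
    differentiableAt_const _
  show fderiv ℝ (fun y => fderiv ℝ f y (Pi.single j 1)) x (Pi.single i 1) = _
  rw [fderiv_clm_apply h1 h2]
  simp

lemma pd_comm (hf : ContDiff ℝ (⊤ : ℕ∞) f) (i j : Fin 3) (x : Fin 3 → ℝ) :
    pd i (pd j f) x = pd j (pd i f) x := by
  rw [pd_pd hf, pd_pd hf]
  exact hf.contDiffAt.isSymmSndFDerivAt (by simp only [minSmoothness_of_isRCLikeNormedField]; exact WithTop.coe_le_coe.2 (le_top : ((2:ℕ):ℕ∞) ≤ ⊤)) _ _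

end Aux

/-- For the Gibbons–Hawking metric `g = f(dx₁²+dx₂²+dx₃²) + f⁻¹α²` with `f` positive
harmonic, the pointwise norm squared of the curvature operator satisfies
`|Rm(g)|² = 6f⁻⁶|Df|⁴ + f⁻⁴ Σ f_{ij}² - 6f⁻⁵ Σ f_{ij} f_i f_j = (1/(4f)) ΔΔ(f⁻¹)`;
here is the analytic identity between the last two expressions. -/
theorem stmt9 (Ω : Set (Fin 3 → ℝ)) (hΩ : IsOpen Ω) (f : (Fin 3 → ℝ) → ℝ)
    (hf : ContDiff ℝ (⊤ : ℕ∞) f) (hpos : ∀ x ∈ Ω, 0 < f x)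
    (hharm : ∀ x ∈ Ω, lap f x = 0) :
    ∀ x ∈ Ω,
      6 * (f x)⁻¹ ^ 6 * (∑ i, (pd i f x) ^ 2) ^ 2
        + (f x)⁻¹ ^ 4 * ∑ i, ∑ j, (pd i (pd j f) x) ^ 2
        - 6 * (f x)⁻¹ ^ 5 * ∑ i, ∑ j, pd i (pd j f) x * pd i f x * pd j f x
      = (1 / (4 * f x)) * lap (lap (fun y => (f y)⁻¹)) x := by
  intro x hx
  -- differentiability facts
  have hd0 : ∀ z, DifferentiableAt ℝ f z := fun z => (hf.differentiable (by simp)).differentiableAt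
  have hd1 : ∀ (i : Fin 3) z, DifferentiableAt ℝ (pd i f) z :=
    fun i z => ((contDiff_pd i hf).differentiable (by simp)).differentiableAt
  have hd2 : ∀ (i j : Fin 3) z, DifferentiableAt ℝ (pd i (pd j f)) z :=
    fun i j z => ((contDiff_pd i (contDiff_pd j hf)).differentiable (by simp)).differentiableAt
  have hd3 : ∀ (i j k : Fin 3) z, DifferentiableAt ℝ (pd i (pd j (pd k f))) z :=
    fun i j k z =>
      ((contDiff_pd i (contDiff_pd j (contDiff_pd k hf))).differentiable (by simp)).differentiableAt
  have hfx : f x ≠ 0 := ne_of_gt (hpos x hx)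
  set g : (Fin 3 → ℝ) → ℝ := fun y => (f y)⁻¹ with hg
  -- step 1 : first derivative of g on Ω
  have c1 : ∀ (i : Fin 3), ∀ z ∈ Ω, pd i g z = -((f z)⁻¹)^2 * pd i f z := by
    intro i z hz
    exact pd_inv (hd0 z) (ne_of_gt (hpos z hz))
  -- the function L = lap g on Ω
  set L : (Fin 3 → ℝ) → ℝ := fun z =>
    2*((f z)⁻¹)^3*((pd 0 f z)^2+(pd 1 f z)^2+(pd 2 f z)^2)
      - ((f z)⁻¹)^2*(pd 0 (pd 0 f) z + pd 1 (pd 1 f) z + pd 2 (pd 2 f) z) with hL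
  have c2 : ∀ z ∈ Ω, lap g z = L z := by
    intro z hz
    have hfz : f z ≠ 0 := ne_of_gt (hpos z hz)
    have step : ∀ i : Fin 3, pd i (pd i g) z
        = 2*((f z)⁻¹)^3*(pd i f z)^2 - ((f z)⁻¹)^2 * pd i (pd i f) z := by
      intro i
      have e : pd i (pd i g) z = pd i (fun w => -((f w)⁻¹)^2 * pd i f w) z :=
        pd_congr hΩ hz (c1 i)
      rw [e, pd_mul (by fun_prop (disch := assumption)) (hd1 i z), pd_neg,
        pd_pow 2 (by fun_prop (disch := assumption)), pd_inv (hd0 z) hfz]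
      ring
    show (∑ i, pd i (pd i g) z) = L z
    rw [Fin.sum_univ_three, step 0, step 1, step 2, hL]
    ring
  -- step 2 : derivative of L on Ω
  set M : Fin 3 → (Fin 3 → ℝ) → ℝ := fun k z =>
    -6*((f z)⁻¹)^4*pd k f z*((pd 0 f z)^2+(pd 1 f z)^2+(pd 2 f z)^2)
    + 4*((f z)⁻¹)^3*(pd 0 f z * pd k (pd 0 f) z + pd 1 f z * pd k (pd 1 f) z
        + pd 2 f z * pd k (pd 2 f) z)
    + 2*((f z)⁻¹)^3*pd k f z*(pd 0 (pd 0 f) z + pd 1 (pd 1 f) z + pd 2 (pd 2 f) z)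
    - ((f z)⁻¹)^2*(pd k (pd 0 (pd 0 f)) z + pd k (pd 1 (pd 1 f)) z + pd k (pd 2 (pd 2 f)) z)
    with hM
  have c3 : ∀ (k : Fin 3), ∀ z ∈ Ω, pd k L z = M k z := by
    intro k z hz
    have hfz : f z ≠ 0 := ne_of_gt (hpos z hz)
    rw [hL, hM]
    simp (disch := first | assumption | fun_prop (disch := assumption)) only
      [pd_sub, pd_add, pd_mul, pd_pow, pd_inv, pd_neg, pd_const]
    push_cast
    ring
  -- step 3 : pd k (pd k (lap g)) x = pd k (M k) x
  have c4 : ∀ k : Fin 3, pd k (pd k (lap g)) x = pd k (M k) x := by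
    intro k
    have e1 : ∀ z ∈ Ω, pd k (lap g) z = M k z := by
      intro z hz
      exact (pd_congr hΩ hz c2).trans (c3 k z hz)
    exact pd_congr hΩ hx e1
  -- step 4 : explicit value of pd k (M k) x
  have c5 : ∀ k : Fin 3, pd k (M k) x =
      24*((f x)⁻¹)^5*(pd k f x)^2*((pd 0 f x)^2+(pd 1 f x)^2+(pd 2 f x)^2)
      - 6*((f x)⁻¹)^4*pd k (pd k f) x*((pd 0 f x)^2+(pd 1 f x)^2+(pd 2 f x)^2)
      - 24*((f x)⁻¹)^4*pd k f x*(pd 0 f x * pd k (pd 0 f) x + pd 1 f x * pd k (pd 1 f) x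
          + pd 2 f x * pd k (pd 2 f) x)
      + 4*((f x)⁻¹)^3*((pd k (pd 0 f) x)^2 + (pd k (pd 1 f) x)^2 + (pd k (pd 2 f) x)^2)
      + 4*((f x)⁻¹)^3*(pd 0 f x * pd k (pd k (pd 0 f)) x + pd 1 f x * pd k (pd k (pd 1 f)) x
          + pd 2 f x * pd k (pd k (pd 2 f)) x)
      - 6*((f x)⁻¹)^4*(pd k f x)^2*(pd 0 (pd 0 f) x + pd 1 (pd 1 f) x + pd 2 (pd 2 f) x)
      + 2*((f x)⁻¹)^3*pd k (pd k f) x*(pd 0 (pd 0 f) x + pd 1 (pd 1 f) x + pd 2 (pd 2 f) x)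
      + 4*((f x)⁻¹)^3*pd k f x*(pd k (pd 0 (pd 0 f)) x + pd k (pd 1 (pd 1 f)) x
          + pd k (pd 2 (pd 2 f)) x)
      - ((f x)⁻¹)^2*(pd k (pd k (pd 0 (pd 0 f))) x + pd k (pd k (pd 1 (pd 1 f))) x
          + pd k (pd k (pd 2 (pd 2 f))) x) := by
    intro k
    rw [hM]
    simp (disch := first | assumption | fun_prop (disch := assumption)) only
      [pd_sub, pd_add, pd_mul, pd_pow, pd_inv, pd_neg, pd_const]
    push_cast
    ring
  -- harmonicity identities
  have hW0 : ∀ z ∈ Ω, pd 0 (pd 0 f) z + pd 1 (pd 1 f) z + pd 2 (pd 2 f) z = (fun _ => (0:ℝ)) z := by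
    intro z hz
    have := hharm z hz
    unfold lap at this
    rwa [Fin.sum_univ_three] at this
  have hA : pd 0 (pd 0 f) x + pd 1 (pd 1 f) x + pd 2 (pd 2 f) x = 0 := hW0 x hx
  have hWexp : ∀ (k : Fin 3) z,
      pd k (fun w => pd 0 (pd 0 f) w + pd 1 (pd 1 f) w + pd 2 (pd 2 f) w) z
        = pd k (pd 0 (pd 0 f)) z + pd k (pd 1 (pd 1 f)) z + pd k (pd 2 (pd 2 f)) z := by
    intro k z
    rw [pd_add (by fun_prop (disch := assumption)) (by fun_prop (disch := assumption)),
      pd_add (by fun_prop (disch := assumption)) (by fun_prop (disch := assumption))]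
  have hB : ∀ (k : Fin 3), ∀ z ∈ Ω,
      pd k (pd 0 (pd 0 f)) z + pd k (pd 1 (pd 1 f)) z + pd k (pd 2 (pd 2 f)) z = 0 := by
    intro k z hz
    rw [← hWexp k z, pd_congr hΩ hz hW0, pd_const]
  have hC : ∀ (k : Fin 3),
      pd k (pd k (pd 0 (pd 0 f))) x + pd k (pd k (pd 1 (pd 1 f))) x
        + pd k (pd k (pd 2 (pd 2 f))) x = 0 := by
    intro k
    have hfun : pd k (fun w => pd 0 (pd 0 f) w + pd 1 (pd 1 f) w + pd 2 (pd 2 f) w)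
        = fun z => pd k (pd 0 (pd 0 f)) z + pd k (pd 1 (pd 1 f)) z + pd k (pd 2 (pd 2 f)) z :=
      funext (fun z => hWexp k z)
    have e2 : ∀ z ∈ Ω,
        (fun z => pd k (pd 0 (pd 0 f)) z + pd k (pd 1 (pd 1 f)) z + pd k (pd 2 (pd 2 f)) z) z
          = (fun _ => (0:ℝ)) z := fun z hz => hB k z hz
    have e3 : pd k (fun z => pd k (pd 0 (pd 0 f)) z + pd k (pd 1 (pd 1 f)) z
        + pd k (pd 2 (pd 2 f)) z) x = 0 := by
      rw [pd_congr hΩ hx e2, pd_const]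
    rw [← e3, pd_add (by fun_prop (disch := assumption)) (by fun_prop (disch := assumption)),
      pd_add (by fun_prop (disch := assumption)) (by fun_prop (disch := assumption))]
  have hD : ∀ (i : Fin 3),
      pd 0 (pd 0 (pd i f)) x + pd 1 (pd 1 (pd i f)) x + pd 2 (pd 2 (pd i f)) x = 0 := by
    intro i
    have e : ∀ k : Fin 3, pd k (pd k (pd i f)) x = pd i (pd k (pd k f)) x := by
      intro k
      have h1 : pd k (pd i f) = pd i (pd k f) := funext (fun z => pd_comm hf k i z)
      rw [h1]
      exact pd_comm (contDiff_pd k hf) k i x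
    rw [e 0, e 1, e 2]
    exact hB i x hx
  -- assemble
  have hlap : lap (lap g) x =
      pd 0 (pd 0 (lap g)) x + pd 1 (pd 1 (lap g)) x + pd 2 (pd 2 (lap g)) x := by
    show (∑ k, pd k (pd k (lap g)) x) = _
    rw [Fin.sum_univ_three]
  have key : lap (lap g) x =
      24*((f x)⁻¹)^5*((pd 0 f x)^2+(pd 1 f x)^2+(pd 2 f x)^2)^2
      - 24*((f x)⁻¹)^4*(
          pd 0 f x * (pd 0 f x * pd 0 (pd 0 f) x + pd 1 f x * pd 0 (pd 1 f) x
            + pd 2 f x * pd 0 (pd 2 f) x)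
        + pd 1 f x * (pd 0 f x * pd 1 (pd 0 f) x + pd 1 f x * pd 1 (pd 1 f) x
            + pd 2 f x * pd 1 (pd 2 f) x)
        + pd 2 f x * (pd 0 f x * pd 2 (pd 0 f) x + pd 1 f x * pd 2 (pd 1 f) x
            + pd 2 f x * pd 2 (pd 2 f) x))
      + 4*((f x)⁻¹)^3*(
          (pd 0 (pd 0 f) x)^2 + (pd 0 (pd 1 f) x)^2 + (pd 0 (pd 2 f) x)^2
        + (pd 1 (pd 0 f) x)^2 + (pd 1 (pd 1 f) x)^2 + (pd 1 (pd 2 f) x)^2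
        + (pd 2 (pd 0 f) x)^2 + (pd 2 (pd 1 f) x)^2 + (pd 2 (pd 2 f) x)^2) := by
    rw [hlap, c4 0, c4 1, c4 2, c5 0, c5 1, c5 2]
    linear_combination
      (-6*((f x)⁻¹)^4*((pd 0 f x)^2+(pd 1 f x)^2+(pd 2 f x)^2)
        - 6*((f x)⁻¹)^4*(pd 0 f x)^2 + 2*((f x)⁻¹)^3*pd 0 (pd 0 f) x
        - 6*((f x)⁻¹)^4*(pd 1 f x)^2 + 2*((f x)⁻¹)^3*pd 1 (pd 1 f) x
        - 6*((f x)⁻¹)^4*(pd 2 f x)^2 + 2*((f x)⁻¹)^3*pd 2 (pd 2 f) x) * hA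
      + 4*((f x)⁻¹)^3*pd 0 f x * (hB 0 x hx)
      + 4*((f x)⁻¹)^3*pd 1 f x * (hB 1 x hx)
      + 4*((f x)⁻¹)^3*pd 2 f x * (hB 2 x hx)
      - ((f x)⁻¹)^2 * (hC 0) - ((f x)⁻¹)^2 * (hC 1) - ((f x)⁻¹)^2 * (hC 2)
      + 4*((f x)⁻¹)^3*(pd 0 f x * (hD 0) + pd 1 f x * (hD 1) + pd 2 f x * (hD 2))
  rw [show lap (lap (fun y => (f y)⁻¹)) x = lap (lap g) x from rfl, key,
    show (1:ℝ)/(4*f x) = (f x)⁻¹/4 by rw [one_div, mul_inv]; ring]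
  simp only [Fin.sum_univ_three]
  ring
end
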